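/- arXiv:quant-ph/0202098 — 3 statements merged into one kernel-verified Lean document; each statement's English description precedes it below -/
import Mathlib

section
/- Let κ > 0, V > 2κ, k > 0 with ω̄(k) < V - κ, and q > 0 with ω̄(k) + ω̄(q) = V. With r = r(k) = -2κV/(V² - (k-q)²) and t = t(k) = -2(k/κ)Ω(k)Ω(-q)/(V + k - q), the current-matching identities hold: ω̄(k)(1 + r²) + 2κr = ω̄(q)·t² and k(1 - r²) = q·t². -/
set_option maxHeartbeats 2000000

noncomputable def ob (κ x : ℝ) : ℝ := Real.sqrt (κ^2 + x^2)
noncomputable def Om (κ x : ℝ) : ℝ := Real.sqrt (ob κ x + x)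

theorem stmt8 (κ V k q : ℝ) (hκ : 0 < κ) (hV : 2*κ < V) (hk : 0 < k)
    (hkV : ob κ k < V - κ) (hq : 0 < q) (hsum : ob κ k + ob κ q = V)
    (r t : ℝ) (hr : r = -2*κ*V / (V^2 - (k - q)^2))
    (ht : t = -2*(k/κ) * (Om κ k * Om κ (-q)) / (V + k - q)) :
    ob κ k * (1 + r^2) + 2*κ*r = ob κ q * t^2 ∧
    k * (1 - r^2) = q * t^2 := by
  set a := ob κ k with hadef
  set b := ob κ q with hbdef
  have ha2 : a^2 = κ^2 + k^2 := Real.sq_sqrt (by positivity)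
  have hb2 : b^2 = κ^2 + q^2 := Real.sq_sqrt (by positivity)
  have ha0 : 0 < a := Real.sqrt_pos.mpr (by positivity)
  have hb0 : 0 < b := Real.sqrt_pos.mpr (by positivity)
  have hak : k < a := by nlinarith [sq_nonneg (a - k)]
  have hbq : q < b := by nlinarith [sq_nonneg (b - q)]
  have hOk : (Om κ k)^2 = a + k := by
    rw [Om, ← hadef]; exact Real.sq_sqrt (by linarith)
  have hOq : (Om κ (-q))^2 = b - q := by
    have : ob κ (-q) = b := by rw [hbdef, ob, ob]; ring_nf
    rw [Om, this]; rw [Real.sq_sqrt (by linarith)]; ring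
  subst hsum
  have hP : 0 < (a + b) + k - q := by linarith
  have hQ : 0 < (a + b) - k + q := by linarith
  have hD : ((a+b)^2 - (k - q)^2) ≠ 0 := by nlinarith
  have ht2 : t^2 = 4*k^2*(a+k)*(b-q)/(κ^2*((a+b)+k-q)^2) := by
    rw [ht]
    rw [div_pow, mul_pow, mul_pow, mul_pow, hOk, hOq]
    field_simp
    ring
  constructor
  · rw [hr, ht2]
    field_simp
    linear_combination (-2*q*κ^6 - 4*q^3*κ^4 - 2*q^5*κ^2 + 2*k*κ^6 + 12*k*q^2*κ^4 + 10*k*q^4*κ^2 - 16*k^2*q*κ^4 - 16*k^2*q^3*κ^2 + 8*k^3*κ^4 + 8*k^3*q^2*κ^2 + 2*b*κ^6 + 4*b*q^2*κ^4 - 2*b*q^4*κ^2 - 8*b*k*q*κ^4 + 8*b*k*q^3*κ^2 + 12*b*k^2*κ^4 - 16*b*k^2*q^2*κ^2 + 20*b*k^3*q*κ^2 - 8*b*k^3*q^3 + 16*b*k^4*q^2 - 4*b*k^5*q + 4*b^2*q*κ^4 + 12*b^2*q^3*κ^2 - 4*b^2*k*κ^4 - 36*b^2*k*q^2*κ^2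 + 32*b^2*k^2*q*κ^2 - 16*b^2*k^2*q^3 + 4*b^2*k^3*κ^2 + 40*b^2*k^3*q^2 - 16*b^2*k^4*q + 4*b^2*k^5 - 4*b^3*κ^4 - 4*b^3*q^2*κ^2 + 8*b^3*k*q*κ^2 + 16*b^3*k^2*q^2 - 8*b^3*k^3*q - 10*b^4*q*κ^2 + 10*b^4*k*κ^2 + 16*b^4*k^2*q - 24*b^4*k^3 + 6*b^5*κ^2 - 16*b^5*k^2 + 1*a*κ^6 + 3*a*q^2*κ^4 - 1*a*q^4*κ^2 - 6*a*k*q*κ^4 + 4*a*k*q^3*κ^2 + 5*a*k^2*κ^4 - 7*a*k^2*q^2*κ^2 + 6*a*k^3*q*κ^2 - 1*a*k^4*κ^2 - 2*a*b*q*κ^4 + 12*a*b*q^3*κ^2 + 2*a*b*k*κ^4 - 36*a*b*k*q^2*κ^2 + 30*a*b*k^2*q*κ^2 - 8*a*b*k^2*q^3 - 2*a*b*k^3*κ^2 + 16*a*b*k^3*q^2 - 4*a*b*k^4*q - 1*a*b^2*κ^4 - 6*a*b^2*q^2*κ^2 + 12*a*b^2*k*q*κ^2 + 5*a*b^2*k^2*κ^2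 + 8*a*b^2*k^2*q^2 + 4*a*b^2*k^4 - 20*a*b^3*q*κ^2 + 20*a*b^3*k*κ^2 + 24*a*b^3*k^2*q - 16*a*b^3*k^3 + 15*a*b^4*κ^2 - 24*a*b^4*k^2 - 2*a^2*q*κ^4 + 4*a^2*q^3*κ^2 + 2*a^2*k*κ^4 - 12*a^2*k*q^2*κ^2 + 10*a^2*k^2*q*κ^2 - 2*a^2*k^3*κ^2 + 2*a^2*b*κ^4 - 4*a^2*b*q^2*κ^2 + 8*a^2*b*k*q*κ^2 + 2*a^2*b*k^2*κ^2 + 4*a^2*b*k^3*q - 20*a^2*b^2*q*κ^2 + 20*a^2*b^2*k*κ^2 + 16*a^2*b^2*k^2*q - 4*a^2*b^2*k^3 + 20*a^2*b^3*κ^2 - 16*a^2*b^3*k^2 + 1*a^3*κ^4 - 1*a^3*q^2*κ^2 + 2*a^3*k*q*κ^2 - 10*a^3*b*q*κ^2 + 10*a^3*b*k*κ^2 + 4*a^3*b*k^2*q + 15*a^3*b^2*κ^2 - 4*a^3*b^2*k^2 - 2*a^4*q*κ^2 + 2*a^4*k*κ^2 + 6*a^4*b*κ^2 + 1*a^5*κ^2)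 * ha2 + (2*q*κ^6 + 2*q^3*κ^4 - 2*k*κ^6 - 10*k*q^2*κ^4 + 18*k^2*q*κ^4 + 2*k^2*q^3*κ^2 - 10*k^3*κ^4 - 10*k^3*q^2*κ^2 + 16*k^4*q*κ^2 - 8*k^5*κ^2 - 2*b*κ^6 - 2*b*q^2*κ^4 + 8*b*k*q*κ^4 - 14*b*k^2*κ^4 + 2*b*k^2*q^2*κ^2 + 4*b*k^3*q*κ^2 - 4*b*k^3*q^3 - 16*b*k^4*κ^2 + 16*b*k^4*q^2 - 16*b*k^5*q - 2*b^2*q*κ^4 + 2*b^2*k*κ^4 + 6*b^2*k^2*q*κ^2 - 18*b^2*k^3*κ^2 + 4*b^2*k^3*q^2 - 16*b^2*k^5 + 2*b^3*κ^4 - 10*b^3*k^2*κ^2 + 4*b^3*k^3*q - 16*b^3*k^4 - 4*b^4*k^3 - 1*a*κ^6 - 2*a*q^2*κ^4 - 1*a*q^4*κ^2 + 6*a*k*q*κ^4 + 6*a*k*q^3*κ^2 - 6*a*k^2*κ^4 - 14*a*k^2*q^2*κ^2 + 16*a*k^3*q*κ^2 - 8*a*k^4*κ^2 + 2*a*b*q*κ^4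 + 2*a*b*q^3*κ^2 - 2*a*b*k*κ^4 - 10*a*b*k*q^2*κ^2 + 20*a*b*k^2*q*κ^2 - 4*a*b*k^2*q^3 - 16*a*b*k^3*κ^2 + 16*a*b*k^3*q^2 - 16*a*b*k^4*q + 2*a*b^2*k*q*κ^2 - 14*a*b^2*k^2*κ^2 + 4*a*b^2*k^2*q^2 - 16*a*b^2*k^4 - 2*a*b^3*q*κ^2 + 2*a*b^3*k*κ^2 + 4*a*b^3*k^2*q - 16*a*b^3*k^3 + 1*a*b^4*κ^2 - 4*a*b^4*k^2) * hb2
  · rw [hr, ht2]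
    field_simp
    linear_combination (-3*κ^6 - 5*q^2*κ^4 - 1*q^4*κ^2 + 10*k*q*κ^4 + 4*k*q^3*κ^2 - 7*k^2*κ^4 - 3*k^2*q^2*κ^2 - 8*k^2*q^4 + 6*k^3*q*κ^2 + 16*k^3*q^3 - 1*k^4*κ^2 - 4*k^4*q^2 + 14*b*q*κ^4 + 12*b*q^3*κ^2 - 14*b*k*κ^4 - 20*b*k*q^2*κ^2 - 16*b*k*q^4 + 22*b*k^2*q*κ^2 + 40*b*k^2*q^3 - 2*b*k^3*κ^2 - 16*b*k^3*q^2 + 4*b*k^4*q - 9*b^2*κ^4 - 6*b^2*q^2*κ^2 - 4*b^2*k*q*κ^2 + 16*b^2*k*q^3 + 9*b^2*k^2*κ^2 - 8*b^2*k^2*q^2 - 20*b^3*q*κ^2 + 20*b^3*k*κ^2 + 16*b^3*k*q^2 - 24*b^3*k^2*q + 15*b^4*κ^2 - 16*b^4*k*q + 6*a*q*κ^4 + 4*a*q^3*κ^2 - 6*a*k*κ^4 - 8*a*k*q^2*κ^2 - 8*a*k*q^4 + 10*a*k^2*q*κ^2 + 16*a*k^2*q^3 - 2*a*k^3*κ^2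 - 4*a*k^3*q^2 - 10*a*b*κ^4 - 4*a*b*q^2*κ^2 + 4*a*b*k*q*κ^2 + 8*a*b*k*q^3 + 2*a*b*k^2*κ^2 + 4*a*b*k^3*q - 20*a*b^2*q*κ^2 + 20*a*b^2*k*κ^2 + 24*a*b^2*k*q^2 - 16*a*b^2*k^2*q + 20*a*b^3*κ^2 - 24*a*b^3*k*q - 3*a^2*κ^4 - 1*a^2*q^2*κ^2 + 2*a^2*k*q*κ^2 + 4*a^2*k^2*q^2 - 10*a^2*b*q*κ^2 + 10*a^2*b*k*κ^2 + 16*a^2*b*k*q^2 - 4*a^2*b*k^2*q + 15*a^2*b^2*κ^2 - 16*a^2*b^2*k*q - 2*a^3*q*κ^2 + 2*a^3*k*κ^2 + 4*a^3*k*q^2 + 6*a^3*b*κ^2 - 4*a^3*b*k*q + 1*a^4*κ^2) * ha2 + (3*κ^6 + 2*q^2*κ^4 - 1*q^4*κ^2 - 10*k*q*κ^4 + 6*k*q^3*κ^2 + 10*k^2*κ^4 - 2*k^2*q^2*κ^2 - 4*k^2*q^4 - 16*k^3*q*κ^2 + 16*k^3*q^3 + 8*k^4*κ^2 - 16*k^4*q^2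 - 14*b*q*κ^4 + 2*b*q^3*κ^2 + 14*b*k*κ^4 + 6*b*k*q^2*κ^2 - 36*b*k^2*q*κ^2 + 4*b*k^2*q^3 + 16*b*k^3*κ^2 - 16*b*k^4*q + 12*b^2*κ^4 - 14*b^2*k*q*κ^2 + 14*b^2*k^2*κ^2 + 4*b^2*k^2*q^2 - 16*b^2*k^3*q - 2*b^3*q*κ^2 + 2*b^3*k*κ^2 - 4*b^3*k^2*q + 1*b^4*κ^2 - 6*a*q*κ^4 + 2*a*q^3*κ^2 + 6*a*k*κ^4 + 2*a*k*q^2*κ^2 - 4*a*k*q^4 - 16*a*k^2*q*κ^2 + 16*a*k^2*q^3 + 8*a*k^3*κ^2 - 16*a*k^3*q^2 + 10*a*b*κ^4 + 2*a*b*q^2*κ^2 - 20*a*b*k*q*κ^2 + 4*a*b*k*q^3 + 16*a*b*k^2*κ^2 - 16*a*b*k^3*q - 10*a*b^2*q*κ^2 + 10*a*b^2*k*κ^2 + 4*a*b^2*k*q^2 - 16*a*b^2*k^2*q + 6*a*b^3*κ^2 - 4*a*b^3*k*q) * hb2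
end

section
/- Let κ > 0, V > 2κ, k > 0 with ω̄(k) < V - κ, q > 0 with ω̄(k) + ω̄(q) = V, and r(k) = -2κV/(V² - (k-q)²). Then -1 < r(k) < 0. -/
theorem stmt9 (κ V k q : ℝ) (hκ : 0 < κ) (hV : 2*κ < V) (hk : 0 < k)
    (hkV : ob κ k < V - κ) (hq : 0 < q) (hsum : ob κ k + ob κ q = V) :
    -1 < -2*κ*V / (V^2 - (k - q)^2) ∧ -2*κ*V / (V^2 - (k - q)^2) < 0 := by
  have ha2 : (ob κ k)^2 = κ^2 + k^2 := Real.sq_sqrt (by positivity)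
  have hb2 : (ob κ q)^2 = κ^2 + q^2 := Real.sq_sqrt (by positivity)
  have ha0 : 0 ≤ ob κ k := Real.sqrt_nonneg _
  have hb0 : 0 ≤ ob κ q := Real.sqrt_nonneg _
  have haκ : κ < ob κ k := by nlinarith
  have hbκ : κ < ob κ q := by nlinarith
  have hkey : 2*κ*V < V^2 - (k - q)^2 := by nlinarith
  have hD : 0 < V^2 - (k - q)^2 := by nlinarith
  constructor
  · rw [lt_div_iff₀ hD]; nlinarith
  · apply div_neg_of_neg_of_pos _ hD; nlinarith
end

section
/- The velocity field v = j¹/j⁰ of the current of U_k^in satisfies on the half-plane x¹ < 0 the bounds q/(ω̄(q) + 4κ|r(k)|/t(k)²) ≤ v(x) ≤ q/ω̄(q), and on x¹ > 0 it equals the constant q/ω̄(q) < 1. In particular the Bohmian speed in the region x¹ < 0 never exceeds the speed q/ω̄(q) attained in x¹ > 0. -/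
open Real

noncomputable def rCoef (κ V k q : ℝ) : ℝ := -2*κ*V / (V^2 - (k - q)^2)
noncomputable def tCoef (κ V k q : ℝ) : ℝ := -2*(k/κ) * (Om κ k * Om κ (-q)) / (V + k - q)
noncomputable def Heav (x : ℝ) : ℝ := if 0 ≤ x then 1 else 0

noncomputable def jCur (κ V k q : ℝ) (p : ℝ × ℝ) : ℝ × ℝ :=
  ((tCoef κ V k q ^ 2 * ob κ q
      + 2*κ * rCoef κ V k q * Heav (-p.2) * (Real.cos (k * p.2) - 1)) / π,
   tCoef κ V k q ^ 2 * q / π)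

/-- The Bohmian velocity field v = j¹/j⁰. -/
noncomputable def vel (κ V k q : ℝ) (p : ℝ × ℝ) : ℝ :=
  (jCur κ V k q p).2 / (jCur κ V k q p).1

lemma abs_lt_ob (κ x : ℝ) (hκ : 0 < κ) : |x| < ob κ x := by
  have h1 : |x| = Real.sqrt (x^2) := (Real.sqrt_sq_eq_abs x).symm
  rw [h1, ob]
  exact Real.sqrt_lt_sqrt (sq_nonneg x) (by nlinarith)

lemma vel_bound (t2 b q E R : ℝ) (ht2 : 0 < t2) (hb : 0 < b) (hq : 0 < q)
    (hE0 : 0 ≤ E) (hE4 : E ≤ R) :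
    q / (b + R/t2) ≤ t2*q / (t2*b + E) ∧ t2*q / (t2*b + E) ≤ q / b := by
  have hR : 0 ≤ R := le_trans hE0 hE4
  have hd : 0 < t2*b + E := by nlinarith
  have hld : 0 < b + R/t2 := by positivity
  have ht2' : t2 ≠ 0 := ne_of_gt ht2
  constructor
  · rw [div_le_div_iff₀ hld hd]
    have h1 : t2*(R/t2) = R := by field_simp
    nlinarith [mul_le_mul_of_nonneg_left hE4 hq.le]
  · rw [div_le_div_iff₀ hd hb]
    nlinarith [mul_nonneg hq.le hE0]

theorem stmt15 (κ V k q : ℝ) (hκ : 0 < κ) (hV : 2*κ < V) (hk : 0 < k)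
    (hkV : ob κ k < V - κ) (hq : 0 < q) (hsum : ob κ k + ob κ q = V) :
    (∀ p : ℝ × ℝ, p.2 < 0 →
      q / (ob κ q + 4*κ*|rCoef κ V k q| / tCoef κ V k q ^ 2) ≤ vel κ V k q p ∧
      vel κ V k q p ≤ q / ob κ q) ∧
    (∀ p : ℝ × ℝ, 0 < p.2 → vel κ V k q p = q / ob κ q) ∧
    q / ob κ q < 1 := by
  have hπ : (0:ℝ) < π := Real.pi_pos
  have hobq : q < ob κ q := lt_of_abs_lt (abs_lt_ob κ q hκ)
  have hobqpos : 0 < ob κ q := lt_trans hq hobq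
  have hobk : k < ob κ k := lt_of_abs_lt (abs_lt_ob κ k hκ)
  have hobkpos : 0 < ob κ k := lt_trans hk hobk
  have hden : 0 < V^2 - (k-q)^2 := by nlinarith
  have hr : rCoef κ V k q < 0 := by
    have : -2*κ*V < 0 := by nlinarith
    exact div_neg_of_neg_of_pos this hden
  have hOmk : 0 < Om κ k := Real.sqrt_pos.mpr (by linarith)
  have hOmq : 0 < Om κ (-q) := by
    have h : q < ob κ (-q) := by
      have := abs_lt_ob κ (-q) hκ
      rwa [abs_neg, abs_of_pos hq] at this
    exact Real.sqrt_pos.mpr (by linarith)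
  have ht : tCoef κ V k q < 0 := by
    have hkκ : 0 < k/κ := div_pos hk hκ
    have hnum : -2*(k/κ) * (Om κ k * Om κ (-q)) < 0 := by
      nlinarith [mul_pos hOmk hOmq, mul_pos hkκ (mul_pos hOmk hOmq)]
    have hd : 0 < V + k - q := by nlinarith
    exact div_neg_of_neg_of_pos hnum hd
  have ht2 : 0 < tCoef κ V k q ^ 2 := pow_two_pos_of_ne_zero (ne_of_lt ht)
  have habsr : |rCoef κ V k q| = -rCoef κ V k q := abs_of_neg hr
  have hdivpi : ∀ a c : ℝ, (a/π)/(c/π) = a/c := by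
    intro a c
    rw [div_div_div_comm, div_self (ne_of_gt hπ), div_one]
  refine ⟨?_, ?_, ?_⟩
  · intro p hp
    have hH : Heav (-p.2) = 1 := if_pos (by linarith)
    have hc1 : Real.cos (k * p.2) - 1 ≤ 0 := by
      have := Real.cos_le_one (k * p.2); linarith
    have hc2 : -2 ≤ Real.cos (k * p.2) - 1 := by
      have := Real.neg_one_le_cos (k * p.2); linarith
    have hE0 : 0 ≤ 2*κ * rCoef κ V k q * Heav (-p.2) * (Real.cos (k * p.2) - 1) := by
      rw [hH]
      nlinarith [mul_nonneg (mul_nonneg hκ.le (neg_nonneg.mpr hr.le)) (neg_nonneg.mpr hc1)]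
    have hE4 : 2*κ * rCoef κ V k q * Heav (-p.2) * (Real.cos (k * p.2) - 1)
        ≤ 4*κ*(-rCoef κ V k q) := by
      rw [hH]
      nlinarith [mul_nonneg (mul_nonneg hκ.le (neg_nonneg.mpr hr.le))
        (by linarith : (0:ℝ) ≤ 2 + (Real.cos (k * p.2) - 1))]
    have hb := vel_bound (tCoef κ V k q ^ 2) (ob κ q) q
      (2*κ * rCoef κ V k q * Heav (-p.2) * (Real.cos (k * p.2) - 1))
      (4*κ*(-rCoef κ V k q)) ht2 hobqpos hq hE0 hE4
    have hvel : vel κ V k q p = tCoef κ V k q ^ 2 * q /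
        (tCoef κ V k q ^ 2 * ob κ q
          + 2*κ * rCoef κ V k q * Heav (-p.2) * (Real.cos (k * p.2) - 1)) := by
      simp only [vel, jCur]
      rw [hdivpi]
    rw [hvel, habsr]
    exact hb
  · intro p hp
    have hH : Heav (-p.2) = 0 := if_neg (by simp; linarith)
    simp only [vel, jCur, hH, mul_zero, zero_mul, add_zero]
    rw [hdivpi, mul_div_mul_left _ _ (ne_of_gt ht2)]
  · exact (div_lt_one hobqpos).mpr hobq
end
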